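/- Let m ≥ 1 be a natural number. On the region D = {(x, y₁, …, y_m) ∈ ℝ^{m+1} : x ≥ 0, yᵢ ≥ 0 for all i, and x + yᵢ ≤ 1 for all i}, the function F(x, y₁, …, y_m) = Σ_{i=1}^{m} [2Λ(πyᵢ) − 2Λ(π(x + yᵢ))] + m·Λ(πx) satisfies F ≤ 4m·Λ(π/4), with equality if and only if x = 1/2 and yᵢ = 1/4 for every i. -/

import Mathlib

/-!
With `a = π y` and `b = π (1 - x - y)`, the reflection `Λ(π - θ) = -Λ(θ)` turns each
summand into `2Λ(a) + 2Λ(b) - Λ(a + b)` with `a, b ≥ 0` and `a + b ≤ π`. Since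
`Λ' = -log|2 sin|` and `|sin (m - τ)| ≤ |sin (m + τ)|` for `0 ≤ τ ≤ m ≤ π/2`, the midpoint
inequality `Λ(a) + Λ(b) ≤ 2Λ((a + b)/2)` holds whenever `a + b ≤ π`, strictly if `a ≠ b`
and `a + b < π`. Applying it to `a, b`, then the duplication formula
`Λ(2s) = 2Λ(s) - 2Λ(π/2 - s)` with `s = (a + b)/2`, and the midpoint inequality once more to
`s, π/2 - s`, bounds the summand by `4Λ(π/4)`, with equality only at `a = b = π/4`.
-/

open Real

/-- The Lobachevsky function `Λ(θ) = -∫₀^θ log|2 sin t| dt`. -/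
noncomputable def Lob (θ : ℝ) : ℝ :=
  -∫ t in (0:ℝ)..θ, Real.log |2 * Real.sin t|

open Filter MeasureTheory intervalIntegral Set

lemma intervalIntegrable_log_abs_two_mul_sin (a b : ℝ) :
    IntervalIntegrable (fun t => log |2 * sin t|) volume a b := by
  simpa only [Real.norm_eq_abs] using
    (analyticOnNhd_const.mul analyticOnNhd_sin).meromorphicOn.intervalIntegrable_log_norm

lemma intervalIntegrable_log_abs_two_mul_sin_add (c a b : ℝ) :
    IntervalIntegrable (fun t => log |2 * sin (c + t)|) volume a b := by
  simpa using (intervalIntegrable_log_abs_two_mul_sin (c + a) (c + b)).comp_add_left c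

lemma intervalIntegrable_log_abs_two_mul_sin_sub (c a b : ℝ) :
    IntervalIntegrable (fun t => log |2 * sin (c - t)|) volume a b := by
  simpa using (intervalIntegrable_log_abs_two_mul_sin (c - a) (c - b)).comp_sub_left c

lemma lob_sub_lob (a b : ℝ) : Lob b - Lob a = -∫ t in a..b, log |2 * sin t| := by
  rw [Lob, Lob, ← integral_interval_sub_left (intervalIntegrable_log_abs_two_mul_sin 0 b)
    (intervalIntegrable_log_abs_two_mul_sin 0 a)]
  ring

lemma lob_pi_div_two : Lob (π / 2) = 0 := by
  have hsplit : ∫ t in (0:ℝ)..π / 2, log |2 * sin t| =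
      ∫ t in (0:ℝ)..π / 2, (log 2 + log (sin t)) := by
    refine integral_congr_ae (Eventually.of_forall fun t ht => ?_)
    rw [uIoc_of_le (by positivity)] at ht
    have hsin : 0 < sin t := sin_pos_of_pos_of_lt_pi ht.1 (by linarith [ht.2, pi_pos])
    rw [abs_of_pos (by positivity), log_mul two_ne_zero hsin.ne']
  have hlog_sin : IntervalIntegrable (fun t => log (sin t)) volume 0 (π / 2) :=
    intervalIntegrable_log_sin
  rw [Lob, hsplit, integral_add intervalIntegrable_const hlog_sin,
    integral_log_sin_zero_pi_div_two, intervalIntegral.integral_const, smul_eq_mul]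
  ring

lemma lob_pi_sub_add_lob (θ : ℝ) : Lob (π - θ) + Lob θ = Lob π := by
  have hrefl : ∫ t in (0:ℝ)..π - θ, log |2 * sin t| = ∫ t in θ..π, log |2 * sin t| := by
    have h := integral_comp_sub_left (fun t => log |2 * sin t|) π (a := θ) (b := π)
    simp only [sin_pi_sub, sub_self] at h
    exact h.symm
  have := lob_sub_lob θ π
  rw [Lob, hrefl]
  linarith

lemma lob_pi : Lob π = 0 := by
  have h := lob_pi_sub_add_lob (π / 2)
  rwa [show π - π / 2 = π / 2 by ring, lob_pi_div_two, add_zero, eq_comm] at h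

lemma lob_pi_sub (θ : ℝ) : Lob (π - θ) = -Lob θ := by
  linarith [lob_pi_sub_add_lob θ, lob_pi]

-- Only off the zeros of `sin` and `cos`: there the junk value `log 0 = 0` breaks `log_mul`.
lemma log_abs_two_mul_sin_two_mul_eventuallyEq :
    (fun t => log |2 * sin (2 * t)|) =ᶠ[codiscrete ℝ]
      fun t => log |2 * sin t| + log |2 * sin (π / 2 - t)| := by
  have hsin : sin ⁻¹' {0}ᶜ ∈ codiscrete ℝ :=
    analyticOnNhd_sin.preimage_zero_mem_codiscrete (x := π / 2) (by simp)
  have hcos : cos ⁻¹' {0}ᶜ ∈ codiscrete ℝ :=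
    analyticOnNhd_cos.preimage_zero_mem_codiscrete (x := 0) (by simp)
  filter_upwards [hsin, hcos] with t hs hc
  simp only [mem_preimage, mem_compl_iff, mem_singleton_iff] at hs hc
  rw [sin_pi_div_two_sub, ← log_mul (by positivity) (by positivity), ← abs_mul, sin_two_mul]
  ring_nf

lemma lob_two_mul (θ : ℝ) : Lob (2 * θ) = 2 * Lob θ - 2 * Lob (π / 2 - θ) := by
  have hdouble : ∫ t in (0:ℝ)..2 * θ, log |2 * sin t| =
      2 * ∫ t in (0:ℝ)..θ, log |2 * sin (2 * t)| := by
    rw [integral_comp_mul_left (fun t => log |2 * sin t|) two_ne_zero, mul_zero, smul_eq_mul,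
      mul_inv_cancel_left₀ two_ne_zero]
  have hsplit := integral_congr_codiscreteWithin (a := 0) (b := θ)
    (log_abs_two_mul_sin_two_mul_eventuallyEq.filter_mono (codiscreteWithin_mono (subset_univ _)))
  have hrefl : ∫ t in (0:ℝ)..θ, log |2 * sin (π / 2 - t)| =
      ∫ t in π / 2 - θ..π / 2, log |2 * sin t| := by
    simpa only [sub_zero] using
      integral_comp_sub_left (fun t => log |2 * sin t|) (π / 2) (a := 0) (b := θ)
  rw [integral_add (intervalIntegrable_log_abs_two_mul_sin _ _)
    (intervalIntegrable_log_abs_two_mul_sin_sub _ _ _), hrefl] at hsplit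
  have := lob_sub_lob (π / 2 - θ) (π / 2)
  rw [lob_pi_div_two] at this
  rw [Lob, Lob, hdouble, hsplit]
  linarith

lemma two_mul_lob_sub_lob_add_sub_lob_sub (m d : ℝ) :
    2 * Lob m - Lob (m + d) - Lob (m - d) =
      ∫ τ in (0:ℝ)..d, (log |2 * sin (m + τ)| - log |2 * sin (m - τ)|) := by
  have hright :
      ∫ τ in (0:ℝ)..d, log |2 * sin (m + τ)| = ∫ t in m..m + d, log |2 * sin t| := by
    simpa only [add_zero] using
      integral_comp_add_left (fun t => log |2 * sin t|) m (a := 0) (b := d)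
  have hleft :
      ∫ τ in (0:ℝ)..d, log |2 * sin (m - τ)| = ∫ t in m - d..m, log |2 * sin t| := by
    simpa only [sub_zero] using
      integral_comp_sub_left (fun t => log |2 * sin t|) m (a := 0) (b := d)
  rw [integral_sub (intervalIntegrable_log_abs_two_mul_sin_add m 0 d)
    (intervalIntegrable_log_abs_two_mul_sin_sub m 0 d), hright, hleft]
  linarith [lob_sub_lob m (m + d), lob_sub_lob (m - d) m]

lemma lob_add_add_lob_sub_lt {m d : ℝ} (hd : 0 < d) (hdm : d ≤ m) (hm : m < π / 2) :
    Lob (m + d) + Lob (m - d) < 2 * Lob m := by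
  have hpos : 0 < ∫ τ in (0:ℝ)..d, (log |2 * sin (m + τ)| - log |2 * sin (m - τ)|) := by
    refine intervalIntegral_pos_of_pos_on ?_ (fun τ ⟨hτ0, hτd⟩ => ?_) hd
    · exact (intervalIntegrable_log_abs_two_mul_sin_add m 0 d).sub
        (intervalIntegrable_log_abs_two_mul_sin_sub m 0 d)
    · have hsin_sub : 0 < sin (m - τ) := sin_pos_of_pos_of_lt_pi (by linarith) (by linarith)
      have hsin_lt : sin (m - τ) < sin (m + τ) := by
        have hcos : 0 < cos m := cos_pos_of_mem_Ioo ⟨by linarith, hm⟩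
        have hsinτ : 0 < sin τ := sin_pos_of_pos_of_lt_pi hτ0 (by linarith)
        nlinarith [sin_add m τ, sin_sub m τ]
      rw [sub_pos, abs_of_pos (by positivity), abs_of_pos (by linarith)]
      exact log_lt_log (by positivity) (by linarith)
  linarith [two_mul_lob_sub_lob_add_sub_lob_sub m d]

lemma lob_add_lob_lt_two_mul_lob_add_div_two {a b : ℝ} (ha : 0 ≤ a) (hb : 0 ≤ b)
    (hne : a ≠ b) (hab : a + b < π) : Lob a + Lob b < 2 * Lob ((a + b) / 2) := by
  wlog hlt : a < b generalizing a b
  · have := this hb ha hne.symm (by linarith) (lt_of_le_of_ne (not_lt.1 hlt) hne.symm)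
    rwa [add_comm b a, add_comm (Lob b)] at this
  have := lob_add_add_lob_sub_lt (m := (a + b) / 2) (d := (b - a) / 2)
    (by linarith) (by linarith) (by linarith)
  rwa [show (a + b) / 2 + (b - a) / 2 = b by ring, show (a + b) / 2 - (b - a) / 2 = a by ring,
    add_comm] at this

lemma lob_add_lob_le_two_mul_lob_add_div_two {a b : ℝ} (ha : 0 ≤ a) (hb : 0 ≤ b)
    (hab : a + b ≤ π) : Lob a + Lob b ≤ 2 * Lob ((a + b) / 2) := by
  rcases eq_or_ne a b with rfl | hne
  · rw [add_self_div_two, two_mul]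
  rcases hab.lt_or_eq with hlt | hπ
  · exact (lob_add_lob_lt_two_mul_lob_add_div_two ha hb hne hlt).le
  · rw [hπ, show b = π - a by linarith, lob_pi_sub, lob_pi_div_two]
    simp

lemma two_mul_lob_add_two_mul_lob_sub_lob_add_lt {a b : ℝ} (ha : 0 ≤ a) (hb : 0 ≤ b)
    (hab : a + b ≤ π) (hne : ¬(a = π / 4 ∧ b = π / 4)) :
    2 * Lob a + 2 * Lob b - Lob (a + b) < 4 * Lob (π / 4) := by
  set s := (a + b) / 2 with hs_def
  have hdouble : Lob (a + b) = 2 * Lob s - 2 * Lob (π / 2 - s) := by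
    rw [← lob_two_mul, mul_div_cancel₀ _ two_ne_zero]
  have hs : (s + (π / 2 - s)) / 2 = π / 4 := by ring
  rcases eq_or_ne s (π / 4) with hs4 | hs4
  · have hne' : a ≠ b := fun h => hne ⟨by linarith, by linarith⟩
    have h₁ := lob_add_lob_lt_two_mul_lob_add_div_two ha hb hne' (by linarith [pi_pos])
    rw [← hs_def, hs4] at h₁
    rw [hdouble, hs4, show π / 2 - π / 4 = π / 4 by ring]
    linarith
  · have h₁ := lob_add_lob_le_two_mul_lob_add_div_two ha hb hab
    rw [← hs_def] at h₁
    have h₂ := lob_add_lob_lt_two_mul_lob_add_div_two (a := s) (b := π / 2 - s) (by positivity)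
      (by linarith) (fun h => hs4 (by linarith)) (by linarith [pi_pos])
    rw [hs] at h₂
    linarith

lemma two_mul_lob_add_two_mul_lob_sub_lob_add_le {a b : ℝ} (ha : 0 ≤ a) (hb : 0 ≤ b)
    (hab : a + b ≤ π) : 2 * Lob a + 2 * Lob b - Lob (a + b) ≤ 4 * Lob (π / 4) := by
  by_cases h : a = π / 4 ∧ b = π / 4
  · rw [h.1, h.2, show π / 4 + π / 4 = π / 2 by ring, lob_pi_div_two]
    linarith
  · exact (two_mul_lob_add_two_mul_lob_sub_lob_add_lt ha hb hab h).le

lemma two_mul_lob_sub_two_mul_lob_add_lob_eq (x y : ℝ) :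
    2 * Lob (π * y) - 2 * Lob (π * (x + y)) + Lob (π * x) =
      2 * Lob (π * y) + 2 * Lob (π - π * (x + y)) - Lob (π * y + (π - π * (x + y))) := by
  rw [lob_pi_sub, show π * y + (π - π * (x + y)) = π - π * x by ring, lob_pi_sub]
  ring

lemma two_mul_lob_sub_two_mul_lob_add_lob_le {x y : ℝ} (hx : 0 ≤ x) (hy : 0 ≤ y)
    (hxy : x + y ≤ 1) :
    2 * Lob (π * y) - 2 * Lob (π * (x + y)) + Lob (π * x) ≤ 4 * Lob (π / 4) := by
  rw [two_mul_lob_sub_two_mul_lob_add_lob_eq]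
  exact two_mul_lob_add_two_mul_lob_sub_lob_add_le (by positivity) (by nlinarith [pi_pos])
    (by nlinarith [pi_pos])

lemma two_mul_lob_sub_two_mul_lob_add_lob_eq_iff {x y : ℝ} (hx : 0 ≤ x) (hy : 0 ≤ y)
    (hxy : x + y ≤ 1) :
    2 * Lob (π * y) - 2 * Lob (π * (x + y)) + Lob (π * x) = 4 * Lob (π / 4) ↔
      x = 1 / 2 ∧ y = 1 / 4 := by
  constructor
  · intro h
    by_contra hne
    have hπ := pi_pos
    have hlt := two_mul_lob_add_two_mul_lob_sub_lob_add_lt (a := π * y) (b := π - π * (x + y))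
      (by positivity) (by nlinarith) (by nlinarith)
      fun ⟨h₁, h₂⟩ => hne ⟨by nlinarith, by nlinarith⟩
    rw [← two_mul_lob_sub_two_mul_lob_add_lob_eq] at hlt
    exact hlt.ne h
  · rintro ⟨rfl, rfl⟩
    rw [show π * (1 / 2 + 1 / 4) = π - π / 4 by ring, lob_pi_sub,
      show π * (1 / 2) = π / 2 by ring, lob_pi_div_two, mul_one_div]
    ring

theorem stmt_15 (m : ℕ) (hm : 1 ≤ m) (x : ℝ) (y : Fin m → ℝ)
    (hx : 0 ≤ x) (hy : ∀ i, 0 ≤ y i) (hxy : ∀ i, x + y i ≤ 1) :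
    ((∑ i : Fin m, (2 * Lob (π * y i) - 2 * Lob (π * (x + y i)))) + m * Lob (π * x)
        ≤ 4 * m * Lob (π/4)) ∧
    ((∑ i : Fin m, (2 * Lob (π * y i) - 2 * Lob (π * (x + y i)))) + m * Lob (π * x)
        = 4 * m * Lob (π/4) ↔ x = 1/2 ∧ ∀ i, y i = 1/4) := by
  have : Nonempty (Fin m) := ⟨⟨0, hm⟩⟩
  have hsum : (∑ i : Fin m, (2 * Lob (π * y i) - 2 * Lob (π * (x + y i)))) + m * Lob (π * x) =
      ∑ i : Fin m, (2 * Lob (π * y i) - 2 * Lob (π * (x + y i)) + Lob (π * x)) := by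
    simp [Finset.sum_add_distrib]
  have hconst : 4 * m * Lob (π / 4) = ∑ _i : Fin m, 4 * Lob (π / 4) := by
    simp only [Finset.sum_const, Finset.card_univ, Fintype.card_fin, nsmul_eq_mul]
    ring
  have hle i (_ : i ∈ Finset.univ) := two_mul_lob_sub_two_mul_lob_add_lob_le hx (hy i) (hxy i)
  rw [hsum, hconst, Finset.sum_eq_sum_iff_of_le hle]
  refine ⟨Finset.sum_le_sum hle, ?_⟩
  simp only [Finset.mem_univ, forall_const,
    two_mul_lob_sub_two_mul_lob_add_lob_eq_iff hx (hy _) (hxy _), forall_and]
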